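/- arXiv:1410.7337 — 6 statements merged into one kernel-verified Lean document; each statement's English description precedes it below -/
import Mathlib

section
/- The set of binary quadratic forms {[a, b, 0] : 0 ≤ a < b}, i.e. forms a·x² + b·x·y with 0 ≤ a < b, is a complete set of representatives for the PSL₂(ℤ)-equivalence classes of integral binary quadratic forms of discriminant d = b², where b is a positive integer. -/
/-!
A form `Q` of square discriminant `b² ≠ 0` has a primitive vector `(r, s)` at which its gradient
is `b • (s, -r)`; by Euler's identity `(r, s)` is a root of `Q`, and completing it to a matrix
of `SL₂(ℤ)` moves `Q` to a form `[a, b, 0]`. Among the forms `[a, b, 0]`, equivalence is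
congruence of `a` modulo `b`: lower unitriangular matrices shift `a` by multiples of `b`, and a
matrix relating two such forms must be lower triangular.
-/

open scoped Real
open Complex

/-- The special linear group `SL(2, ℤ)`. -/
abbrev SL2Z := Matrix.SpecialLinearGroup (Fin 2) ℤ

/-- Evaluation of the binary quadratic form `[a,b,c]` at `(x,y)`. -/
def evalQF (Q : ℤ × ℤ × ℤ) (x y : ℤ) : ℤ := Q.1 * x ^ 2 + Q.2.1 * x * y + Q.2.2 * y ^ 2

/-- Discriminant of a binary quadratic form. -/
def discQF (Q : ℤ × ℤ × ℤ) : ℤ := Q.2.1 ^ 2 - 4 * Q.1 * Q.2.2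

/-- Action of `SL(2,ℤ)` on binary quadratic forms: `(γQ)(x,y) = Q(Dx - By, -Cx + Ay)`. -/
def actQF (γ : SL2Z) (Q : ℤ × ℤ × ℤ) : ℤ × ℤ × ℤ :=
  (Q.1 * (γ.1 1 1) ^ 2 - Q.2.1 * (γ.1 1 0) * (γ.1 1 1) + Q.2.2 * (γ.1 1 0) ^ 2,
   -2 * Q.1 * (γ.1 0 1) * (γ.1 1 1) + Q.2.1 * ((γ.1 0 0) * (γ.1 1 1) + (γ.1 0 1) * (γ.1 1 0))
     - 2 * Q.2.2 * (γ.1 0 0) * (γ.1 1 0),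
   Q.1 * (γ.1 0 1) ^ 2 - Q.2.1 * (γ.1 0 0) * (γ.1 0 1) + Q.2.2 * (γ.1 0 0) ^ 2)

/-- Two forms are `PSL₂(ℤ)`-equivalent. -/
def EquivQF (Q Q' : ℤ × ℤ × ℤ) : Prop := ∃ γ : SL2Z, actQF γ Q = Q'

/-- Two forms are `Γ∞`-equivalent. -/
def GammaInfEquivQF (Q Q' : ℤ × ℤ × ℤ) : Prop :=
  ∃ γ : SL2Z, γ.1 1 0 = 0 ∧ actQF γ Q = Q'

lemma actQF_one (Q : ℤ × ℤ × ℤ) : actQF 1 Q = Q := by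
  obtain ⟨a, b, c⟩ := Q
  simp [actQF, Matrix.SpecialLinearGroup.coe_one, Matrix.one_apply]

lemma actQF_mul (γ δ : SL2Z) (Q : ℤ × ℤ × ℤ) :
    actQF (γ * δ) Q = actQF γ (actQF δ Q) := by
  obtain ⟨a, b, c⟩ := Q
  simp only [actQF, Matrix.SpecialLinearGroup.coe_mul, Matrix.mul_apply, Fin.sum_univ_two,
    Prod.mk.injEq]
  refine ⟨by ring, by ring, by ring⟩

lemma SL2Z_inv_c (γ : SL2Z) : (γ⁻¹).1 1 0 = -(γ.1 1 0) := by
  rw [Matrix.SpecialLinearGroup.coe_inv, Matrix.adjugate_fin_two]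
  simp

lemma discQF_actQF (γ : SL2Z) (Q : ℤ × ℤ × ℤ) : discQF (actQF γ Q) = discQF Q := by
  have h := γ.2
  rw [Matrix.det_fin_two] at h
  obtain ⟨a, b, c⟩ := Q
  simp only [discQF, actQF]
  linear_combination (γ.1 0 0 * γ.1 1 1 - γ.1 0 1 * γ.1 1 0 + 1) * (b ^ 2 - 4 * a * c) * h

/-- `Γ∞ ≤ SL(2,ℤ)`: matrices with lower-left entry zero. -/
def GammaInf : Subgroup SL2Z where
  carrier := {γ | γ.1 1 0 = 0}
  one_mem' := by simp [Matrix.SpecialLinearGroup.coe_one, Matrix.one_apply]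
  mul_mem' := by
    intro γ δ hγ hδ
    simp only [Set.mem_setOf_eq, Matrix.SpecialLinearGroup.coe_mul, Matrix.mul_apply,
      Fin.sum_univ_two] at *
    rw [hδ] at *
    simp [hγ, hδ]
  inv_mem' := by
    intro γ hγ
    simp only [Set.mem_setOf_eq] at *
    rw [SL2Z_inv_c, hγ, neg_zero]

/-- Möbius action of `SL(2,ℤ)` on `ℂ`. -/
noncomputable def moeb (γ : SL2Z) (τ : ℂ) : ℂ :=
  ((γ.1 0 0 : ℂ) * τ + (γ.1 0 1 : ℂ)) / ((γ.1 1 0 : ℂ) * τ + (γ.1 1 1 : ℂ))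

/-- `e(x) = e^{2πix}`. -/
noncomputable def ee (x : ℝ) : ℂ := Complex.exp (2 * π * Complex.I * x)

/-- `ε_a`. -/
noncomputable def epsFactor (a : ℕ) : ℂ := if a % 4 = 1 then 1 else Complex.I

/-- The modified Kloosterman sum `K⁺(d, D; 4c)`. -/
noncomputable def KloostermanPlus (d D : ℤ) (c : ℕ) : ℂ :=
  (1 - Complex.I) * (if c % 2 = 0 then 1 else 2) *
    ∑ a ∈ Finset.range (4 * c), if Nat.gcd a (4 * c) = 1 then
      (jacobiSym (4 * c : ℤ) a : ℂ) * epsFactor a *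
        ee (((d * a + D * ((a ^ (Nat.totient (4 * c) - 1)) % (4 * c) : ℕ) : ℤ) : ℝ) / (4 * c))
    else 0

/-- The Kronecker symbol `(D/n)`. -/
def kron (D : ℤ) (n : ℕ) : ℤ :=
  (if D % 2 = 0 then 0 else if D % 8 = 1 ∨ D % 8 = 7 then 1 else -1) ^ (n.factorization 2) *
    jacobiSym D (n / 2 ^ (n.factorization 2))

/-- `D` is a positive fundamental discriminant. -/
def IsFundDisc (D : ℤ) : Prop :=
  0 < D ∧ ((D % 4 = 1 ∧ Squarefree D) ∨
    (D % 4 = 0 ∧ Squarefree (D / 4) ∧ ((D / 4) % 4 = 2 ∨ (D / 4) % 4 = 3)))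

/-- The modified Bessel function of the first kind `I_ν`, of a real argument. -/
noncomputable def besselI (ν : ℂ) (x : ℝ) : ℂ :=
  ∑' k : ℕ, ((x : ℂ) / 2) ^ (ν + 2 * k) / ((Nat.factorial k : ℂ) * Complex.Gamma (ν + k + 1))

/-- The Bessel function of the first kind `J_ν`, of a real argument. -/
noncomputable def besselJ (ν : ℂ) (x : ℝ) : ℂ :=
  ∑' k : ℕ, (-1) ^ k * ((x : ℂ) / 2) ^ (ν + 2 * k) /
    ((Nat.factorial k : ℂ) * Complex.Gamma (ν + k + 1))

/-- The `c`-th term of the Kloosterman–Bessel series `b(d,D,s)`. -/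
noncomputable def bterm (d D : ℤ) (s : ℂ) (c : ℕ) : ℂ :=
  if d * D ≠ 0 then
    KloostermanPlus d D c * (2 : ℂ) ^ (-(3 : ℂ) / 2) * (π : ℂ) *
      ((d * D : ℤ) : ℂ) ^ ((1 : ℂ) / 4) * (c : ℂ)⁻¹ *
      besselJ (2 * s - 1) (π * Real.sqrt ((d * D : ℤ) : ℝ) / c)
  else if d + D ≠ 0 then
    KloostermanPlus d D c * (2 : ℂ) ^ (-(4 : ℂ) * s) * (π : ℂ) ^ (s + 1 / 4) *
      ((d + D : ℤ) : ℂ) ^ (s - 1 / 4) * (c : ℂ) ^ (-2 * s)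
  else
    KloostermanPlus 0 0 c * (2 : ℂ) ^ ((1 : ℂ) / 2 - 6 * s) * (π : ℂ) ^ ((1 : ℂ) / 2) *
      Complex.Gamma (2 * s) * (c : ℂ) ^ (-2 * s)

/-- The coefficient function `b(d, D, s)`. -/
noncomputable def bcoef (d D : ℤ) (s : ℂ) : ℂ := ∑' c : ℕ, bterm d D s (c + 1)

/-- The Dirichlet `L`-function `L_D(s)`. -/
noncomputable def LDir (D : ℤ) (s : ℂ) : ℂ :=
  ∑' n : ℕ, (kron D (n + 1) : ℂ) * ((n + 1 : ℕ) : ℂ) ^ (-s)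

/-- `σ_w(m) = Σ_{n ∣ m} n^w`. -/
noncomputable def sigmaC (w : ℂ) (m : ℕ) : ℂ := ∑ n ∈ m.divisors, (n : ℂ) ^ w

/-- `φ_{m,s}(y) = 2π m^{1/2} y^{1/2} I_{s-1/2}(2πmy)`. -/
noncomputable def phiMS (m : ℕ) (s : ℂ) (y : ℝ) : ℂ :=
  2 * π * Real.sqrt (m * y) * besselI (s - 1 / 2) (2 * π * m * y)

/-- The cosets in `Γ∞\Γ` corresponding to the (rational or infinite) roots of `Q`. -/
def rootCosets (Q : ℤ × ℤ × ℤ) : Set (Quotient (QuotientGroup.rightRel GammaInf)) :=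
  {q | ∃ (γ : SL2Z) (r s : ℤ), q = Quotient.mk _ γ ∧ γ.1 1 0 = s ∧ γ.1 1 1 = -r ∧
    evalQF Q r s = 0}

/-- `Γ`-equivalence as a setoid on forms of discriminant `d`. -/
def sGQ (d : ℤ) : Setoid {Q : ℤ × ℤ × ℤ // discQF Q = d} where
  r Q Q' := ∃ γ : SL2Z, actQF γ Q.val = Q'.val
  iseqv := by
    constructor
    · exact fun Q => ⟨1, actQF_one Q.val⟩
    · rintro Q Q' ⟨γ, hγ⟩
      exact ⟨γ⁻¹, by rw [← hγ, ← actQF_mul, inv_mul_cancel, actQF_one]⟩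
    · rintro Q Q' Q'' ⟨γ, hγ⟩ ⟨δ, hδ⟩
      exact ⟨δ * γ, by rw [actQF_mul, hγ, hδ]⟩

/-- `Γ∞`-equivalence as a setoid on forms of discriminant `d`. -/
def sGIQ (d : ℤ) : Setoid {Q : ℤ × ℤ × ℤ // discQF Q = d} where
  r Q Q' := ∃ γ : SL2Z, γ.1 1 0 = 0 ∧ actQF γ Q.val = Q'.val
  iseqv := by
    constructor
    · exact fun Q => ⟨1, by simp [Matrix.SpecialLinearGroup.coe_one, Matrix.one_apply],
        actQF_one Q.val⟩
    · rintro Q Q' ⟨γ, hc, hγ⟩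
      exact ⟨γ⁻¹, by rw [SL2Z_inv_c, hc, neg_zero],
        by rw [← hγ, ← actQF_mul, inv_mul_cancel, actQF_one]⟩
    · rintro Q Q' Q'' ⟨γ, hcγ, hγ⟩ ⟨δ, hcδ, hδ⟩
      refine ⟨δ * γ, ?_, by rw [actQF_mul, hγ, hδ]⟩
      simp [Matrix.SpecialLinearGroup.coe_mul, Matrix.mul_apply, Fin.sum_univ_two, hcγ, hcδ]

def sl2Z (x y z w : ℤ) (h : x * w - y * z = 1) : SL2Z :=
  ⟨!![x, y; z, w], by rwa [Matrix.det_fin_two_of]⟩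

lemma actQF_sl2Z (x y z w : ℤ) (h : x * w - y * z = 1) (A B C : ℤ) :
    actQF (sl2Z x y z w h) (A, B, C) =
      (A * w ^ 2 - B * z * w + C * z ^ 2,
       -2 * A * y * w + B * (x * w + y * z) - 2 * C * x * z,
       A * y ^ 2 - B * x * y + C * x ^ 2) := rfl

namespace EquivQF

lemma symm {Q Q' : ℤ × ℤ × ℤ} (h : EquivQF Q Q') : EquivQF Q' Q := by
  obtain ⟨γ, rfl⟩ := h
  exact ⟨γ⁻¹, by rw [← actQF_mul, inv_mul_cancel, actQF_one]⟩

lemma trans {Q Q' Q'' : ℤ × ℤ × ℤ} (h : EquivQF Q Q') (h' : EquivQF Q' Q'') :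
    EquivQF Q Q'' := by
  obtain ⟨γ, rfl⟩ := h
  obtain ⟨δ, rfl⟩ := h'
  exact ⟨δ * γ, actQF_mul δ γ Q⟩

end EquivQF

lemma equivQF_sub_mul (a b n : ℤ) : EquivQF (a, b, 0) (a - b * n, b, 0) :=
  ⟨sl2Z 1 0 n 1 (by ring), by rw [actQF_sl2Z]; ext <;> simp only <;> ring⟩

lemma modEq_of_equivQF {a₁ a₂ b : ℤ} (hb : b ≠ 0) (h : EquivQF (a₁, b, 0) (a₂, b, 0)) :
    a₁ ≡ a₂ [ZMOD b] := by
  obtain ⟨γ, hγ⟩ := h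
  simp only [actQF, Prod.mk.injEq] at hγ
  obtain ⟨ha, hb', hc⟩ := hγ
  set x := γ.1 0 0
  set y := γ.1 0 1
  set z := γ.1 1 0
  set w := γ.1 1 1
  have hdet : x * w - y * z = 1 := by
    have := γ.2
    rwa [Matrix.det_fin_two] at this
  have hy : y = 0 := by
    by_contra hy
    have hroot : a₁ * y - b * x = 0 :=
      (mul_eq_zero.mp (by linear_combination hc : y * (a₁ * y - b * x) = 0)).resolve_left hy
    have h2b : 2 * b = 0 := by linear_combination -hb' - 2 * w * hroot - b * hdet
    omega
  have hw : w ^ 2 = 1 :=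
    Int.isUnit_sq (IsUnit.of_mul_eq_one_right x (by simpa [hy] using hdet))
  exact Int.modEq_iff_dvd.mpr ⟨-(z * w), by linear_combination a₁ * hw - ha⟩

lemma equivQF_iff_modEq {a₁ a₂ b : ℤ} (hb : b ≠ 0) :
    EquivQF (a₁, b, 0) (a₂, b, 0) ↔ a₁ ≡ a₂ [ZMOD b] := by
  refine ⟨modEq_of_equivQF hb, fun h => ?_⟩
  obtain ⟨n, hn⟩ := Int.modEq_iff_dvd.mp h.symm
  have h' := equivQF_sub_mul a₁ b n
  rwa [← hn, sub_sub_cancel] at h'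

lemma exists_equivQF_of_grad_eq {A B C b r s : ℤ} (hrs : IsCoprime r s)
    (hx : 2 * A * r + B * s = b * s) (hy : B * r + 2 * C * s = -(b * r)) :
    ∃ a, EquivQF (A, B, C) (a, b, 0) := by
  obtain ⟨p, q, hpq⟩ := hrs
  refine ⟨A * q ^ 2 - B * p * q + C * p ^ 2, sl2Z s (-r) p q (by linear_combination hpq), ?_⟩
  rw [actQF_sl2Z]
  ext
  · rfl
  · linear_combination q * hx - p * hy + b * hpq
  · exact mul_left_cancel₀ two_ne_zero (by linear_combination r * hx + s * hy)

lemma exists_isCoprime_grad_eq {A B C b : ℤ} (hb : b ≠ 0) (hQ : discQF (A, B, C) = b ^ 2) :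
    ∃ r s, IsCoprime r s ∧ 2 * A * r + B * s = b * s ∧ B * r + 2 * C * s = -(b * r) := by
  simp only [discQF] at hQ
  obtain ⟨r, s, hrs, hx, hy⟩ : ∃ r s : ℤ, (r ≠ 0 ∨ s ≠ 0) ∧
      2 * A * r + B * s = b * s ∧ B * r + 2 * C * s = -(b * r) := by
    -- `(b - B : 2A)` is the root given by the quadratic formula; it degenerates only for
    -- `[0, b, C]`, whose corresponding root is `(-C : b)`.
    by_cases h : A = 0 ∧ B = b
    · obtain ⟨rfl, rfl⟩ := h
      exact ⟨-C, B, Or.inr hb, by ring, by ring⟩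
    · exact ⟨b - B, 2 * A, by omega, by ring, by linear_combination -hQ⟩
  obtain ⟨g, r', s', hg, hcop, rfl, rfl⟩ := Int.exists_gcd_one' (Int.gcd_pos_iff.mpr hrs)
  have hg : (g : ℤ) ≠ 0 := by exact_mod_cast hg.ne'
  refine ⟨r', s', Int.isCoprime_iff_gcd_eq_one.mpr hcop, ?_, ?_⟩
  · exact mul_right_cancel₀ hg (by linear_combination hx)
  · exact mul_right_cancel₀ hg (by linear_combination hy)

lemma exists_equivQF_of_discQF_eq_sq {Q : ℤ × ℤ × ℤ} {b : ℤ} (hb : b ≠ 0)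
    (hQ : discQF Q = b ^ 2) : ∃ a, EquivQF Q (a, b, 0) := by
  obtain ⟨r, s, hrs, hx, hy⟩ := exists_isCoprime_grad_eq hb hQ
  exact exists_equivQF_of_grad_eq hrs hx hy

/-- `{[a,b,0] : 0 ≤ a < b}` is a complete set of representatives for
`Γ\𝒬_{b²}`. -/
theorem stmt0 (b : ℤ) (hb : 0 < b) (Q : ℤ × ℤ × ℤ) (hQ : discQF Q = b ^ 2) :
    ∃! a : ℤ, 0 ≤ a ∧ a < b ∧ EquivQF Q (a, b, 0) := by
  obtain ⟨a₀, h₀⟩ := exists_equivQF_of_discQF_eq_sq hb.ne' hQ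
  refine ⟨a₀ % b, ⟨Int.emod_nonneg _ hb.ne', Int.emod_lt_of_pos _ hb, ?_⟩, ?_⟩
  · exact h₀.trans ((equivQF_iff_modEq hb.ne').mpr (Int.mod_modEq a₀ b).symm)
  · rintro a ⟨ha₀, hab, ha⟩
    have hmod : a ≡ a₀ [ZMOD b] := (equivQF_iff_modEq hb.ne').mp (ha.symm.trans h₀)
    exact (Int.emod_eq_of_lt ha₀ hab).symm.trans hmod
end

section
/- If γ = [[A,B],[C,D]] ∈ SL₂(ℤ) satisfies D(aD - bC) = a', b(AD + BC) - 2aBD = b, and B(aB - Ab) = 0 for integers a, a', b with b > 0, then a' ≡ a (mod b). -/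
open scoped Real
open Complex

theorem stmt1 (A B C D a a' b : ℤ) (hdet : A * D - B * C = 1) (hb : 0 < b)
    (h1 : D * (a * D - b * C) = a') (h2 : b * (A * D + B * C) - 2 * a * B * D = b)
    (h3 : B * (a * B - A * b) = 0) : a' ≡ a [ZMOD b] := by
  rcases mul_eq_zero.mp h3 with hB | h
  · subst hB
    have hAD : A * D = 1 := by linarith
    have hD2 : D * D = 1 := by
      have : D ∣ 1 := ⟨A, by linarith [hAD]⟩
      rcases Int.isUnit_iff.mp (isUnit_of_dvd_one this) with h1 | h1 <;> simp [h1]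
    have : b ∣ a - a' := ⟨C * D, by linear_combination h1 - a * hD2⟩
    exact Int.modEq_iff_dvd.mpr this
  · exfalso
    have h2b : (2 : ℤ) * b = 0 := by linear_combination -h2 - 2 * D * h - b * hdet
    omega
end

section
/- For the quadratic form Q = [0,1,0] (i.e. Q(x,y) = xy) and any positive integer m, the function j_{m,Q}(iy) = j_m(iy) - 2 sinh(2πmy) - 2 sinh(2πm/y) satisfies lim_{y→0⁺} j_{m,Q}(iy)/y = -4πm. -/
open scoped Real
open Complex

/-!
By modularity `j_m(iy) = j_m(i/y)`, and at the cusp the Fourier expansion gives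
`j_m(it) - 2 sinh(2πmt) = e^{-2πmt} + Σ c(n) e^{-2π(n+1)t}`, which decays exponentially, so it is
`o(1/t)` as `t → ∞`. With `t = 1/y`, the term `2 sinh(2πm/y)` is therefore cancelled up to `o(y)`,
and what remains is `-2 sinh(2πmy)/y → -4πm`.
-/

open Filter Topology

lemma tendsto_mul_exp_neg_mul_atTop {a : ℝ} (ha : 0 < a) :
    Tendsto (fun t : ℝ => t * Real.exp (-(a * t))) atTop (𝓝 0) := by
  have h := ((Real.tendsto_pow_mul_exp_neg_atTop_nhds_zero 1).comp
    (tendsto_id.const_mul_atTop ha)).const_mul a⁻¹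
  rw [mul_zero] at h
  refine h.congr fun t => ?_
  simp only [Function.comp_apply, id, pow_one]
  field_simp

lemma norm_tsum_mul_exp_le {c : ℕ → ℂ} {a t : ℝ} (ha : 0 ≤ a) (ht : 1 ≤ t)
    (hs : Summable fun n : ℕ => ‖c n‖ * Real.exp (-(a * (n + 1)))) :
    ‖∑' n : ℕ, c n * (Real.exp (-(a * (n + 1) * t)) : ℂ)‖ ≤
      (∑' n : ℕ, ‖c n‖ * Real.exp (-(a * (n + 1)))) * Real.exp (-(a * (t - 1))) := by
  refine tsum_of_norm_bounded (hs.hasSum.mul_right _) fun n => ?_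
  rw [norm_mul, Complex.norm_real, Real.norm_of_nonneg (Real.exp_pos _).le, mul_assoc ‖c n‖,
    ← Real.exp_add]
  gcongr
  -- `(n + 1) t ≥ (n + 1) + (t - 1)` since `n (t - 1) ≥ 0`
  nlinarith [mul_nonneg (mul_nonneg ha (Nat.cast_nonneg n : (0 : ℝ) ≤ n)) (sub_nonneg.2 ht)]

lemma tendsto_mul_tsum_mul_exp_atTop {c : ℕ → ℂ} {a : ℝ} (ha : 0 < a)
    (hs : Summable fun n : ℕ => ‖c n‖ * Real.exp (-(a * (n + 1)))) :
    Tendsto (fun t : ℝ => (t : ℂ) * ∑' n : ℕ, c n * (Real.exp (-(a * (n + 1) * t)) : ℂ))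
      atTop (𝓝 0) := by
  set S := ∑' n : ℕ, ‖c n‖ * Real.exp (-(a * (n + 1)))
  have hbound := (tendsto_mul_exp_neg_mul_atTop ha).const_mul (S * Real.exp a)
  rw [mul_zero] at hbound
  refine squeeze_zero_norm' ?_ hbound
  filter_upwards [eventually_ge_atTop 1] with t ht
  rw [norm_mul, Complex.norm_real, Real.norm_of_nonneg (by linarith)]
  calc t * ‖∑' n : ℕ, c n * (Real.exp (-(a * (n + 1) * t)) : ℂ)‖
      ≤ t * (S * Real.exp (-(a * (t - 1)))) := by
        gcongr
        exact norm_tsum_mul_exp_le ha.le ht hs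
    _ = S * Real.exp a * (t * Real.exp (-(a * t))) := by
        rw [show -(a * (t - 1)) = a + -(a * t) by ring, Real.exp_add]
        ring

lemma tendsto_sinh_mul_div_nhdsGT_zero (b : ℝ) :
    Tendsto (fun y : ℝ => Real.sinh (b * y) / y) (𝓝[>] 0) (𝓝 b) := by
  have h : HasDerivAt (fun y : ℝ => Real.sinh (b * y)) b 0 := by
    simpa using ((hasDerivAt_id (0 : ℝ)).const_mul b).sinh
  refine h.tendsto_slope_zero_right.congr fun y => ?_
  simp [div_eq_inv_mul]

section JFunction

variable {m : ℕ} {jm : ℂ → ℂ} {c : ℕ → ℂ}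

lemma jm_I_mul_inv (hinv : ∀ τ : ℂ, 0 < τ.im → jm (-1 / τ) = jm τ) {y : ℝ} (hy : 0 < y) :
    jm (I * (y⁻¹ : ℝ)) = jm (I * y) := by
  rw [← hinv _ (by simpa using hy)]
  congr 1
  have hy' : (y : ℂ) ≠ 0 := by exact_mod_cast hy.ne'
  push_cast
  field_simp
  rw [I_sq]

lemma jm_I_mul_sub_two_sinh_eq
    (hexp : ∀ τ : ℂ, 0 < τ.im →
      jm τ = Complex.exp (-2 * π * Complex.I * m * τ) +
        ∑' n : ℕ, c n * Complex.exp (2 * π * Complex.I * (n + 1) * τ))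
    {t : ℝ} (ht : 0 < t) :
    jm (I * t) - 2 * (Real.sinh (2 * π * m * t) : ℂ) =
      (Real.exp (-(2 * π * m * t)) : ℂ) +
        ∑' n : ℕ, c n * (Real.exp (-(2 * π * (n + 1) * t)) : ℂ) := by
  have hpole : Complex.exp (-2 * π * I * m * (I * t)) = Complex.exp (2 * π * m * t) := by
    congr 1
    linear_combination (-2 * π * m * t : ℂ) * I_sq
  have hq (n : ℕ) : Complex.exp (2 * π * I * (n + 1) * (I * t)) =
      Complex.exp (-(2 * π * (n + 1) * t)) := by
    congr 1
    linear_combination (2 * π * (n + 1) * t : ℂ) * I_sq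
  rw [hexp _ (by simpa using ht), hpole, tsum_congr fun n => by rw [hq n], Complex.ofReal_sinh,
    two_sinh]
  push_cast
  ring

lemma tendsto_mul_jm_I_mul_sub_two_sinh_atTop (hm : 1 ≤ m)
    (hsum : ∀ t : ℝ, 0 < t → Summable (fun n : ℕ => ‖c n‖ * Real.exp (-2 * π * (n + 1) * t)))
    (hexp : ∀ τ : ℂ, 0 < τ.im →
      jm τ = Complex.exp (-2 * π * Complex.I * m * τ) +
        ∑' n : ℕ, c n * Complex.exp (2 * π * Complex.I * (n + 1) * τ)) :
    Tendsto (fun t : ℝ => (t : ℂ) * (jm (I * t) - 2 * (Real.sinh (2 * π * m * t) : ℂ)))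
      atTop (𝓝 0) := by
  have hm' : (0 : ℝ) < m := by exact_mod_cast hm
  have hpole := (tendsto_mul_exp_neg_mul_atTop (by positivity : 0 < 2 * π * m)).ofReal
  have hs : Summable fun n : ℕ => ‖c n‖ * Real.exp (-(2 * π * (n + 1))) := by
    simpa [neg_mul] using hsum 1 one_pos
  have hq := tendsto_mul_tsum_mul_exp_atTop (by positivity : 0 < 2 * π) hs
  rw [Complex.ofReal_zero] at hpole
  rw [← add_zero (0 : ℂ)]
  refine (hpole.add hq).congr' ?_
  filter_upwards [eventually_gt_atTop 0] with t ht
  rw [jm_I_mul_sub_two_sinh_eq hexp ht]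
  push_cast
  ring

end JFunction

/-- for `Q = [0,1,0]`, `lim_{y→0⁺} j_{m,Q}(iy)/y = -4πm`. -/
theorem stmt4 (m : ℕ) (hm : 1 ≤ m) (jm : ℂ → ℂ) (c : ℕ → ℂ)
    (hsum : ∀ t : ℝ, 0 < t → Summable (fun n : ℕ => ‖c n‖ * Real.exp (-2 * π * (n + 1) * t)))
    (hexp : ∀ τ : ℂ, 0 < τ.im →
      jm τ = Complex.exp (-2 * π * Complex.I * m * τ) +
        ∑' n : ℕ, c n * Complex.exp (2 * π * Complex.I * (n + 1) * τ))
    (hinv : ∀ τ : ℂ, 0 < τ.im → jm (-1 / τ) = jm τ) :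
    Filter.Tendsto
      (fun y : ℝ =>
        (jm (Complex.I * y) - 2 * (Real.sinh (2 * π * m * y) : ℂ)
          - 2 * (Real.sinh (2 * π * m / y) : ℂ)) / (y : ℂ))
      (nhdsWithin 0 (Set.Ioi 0)) (nhds (-4 * π * m)) := by
  have hcusp : Tendsto (fun y : ℝ => (jm (I * y) - 2 * (Real.sinh (2 * π * m / y) : ℂ)) / y)
      (𝓝[>] 0) (𝓝 0) := by
    refine ((tendsto_mul_jm_I_mul_sub_two_sinh_atTop hm hsum hexp).comp
      tendsto_inv_nhdsGT_zero).congr' ?_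
    filter_upwards [self_mem_nhdsWithin] with y (hy : 0 < y)
    rw [Function.comp_apply, jm_I_mul_inv hinv hy, div_eq_mul_inv (2 * π * m), Complex.ofReal_inv,
      div_eq_inv_mul]
  have hsinh : Tendsto (fun y : ℝ => 2 * (Real.sinh (2 * π * m * y) : ℂ) / y)
      (𝓝[>] 0) (𝓝 (4 * π * m)) := by
    have h := ((tendsto_sinh_mul_div_nhdsGT_zero (2 * π * m)).const_mul 2).ofReal
    convert h using 2 with y <;> push_cast <;> ring
  convert hcusp.sub hsinh using 2 with y <;> ring
end

section
/- Let d = b₀² > 0 be a square discriminant. The map (γ, Q) ↦ γQ induces a bijection between (Γ_∞\Γ) × (Γ\Q_d) and Γ_∞\Q_d, where Γ = PSL₂(ℤ), Γ_∞ is the stabilizer of ∞, and Q_d is the set of integral binary quadratic forms of discriminant d. -/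
open scoped Real
open Complex

lemma pell4 {t v : ℤ} (h : v^2 = t^2 - 4) : v = 0 := by
  have h4 : (t - v) * (t + v) = 4 := by linear_combination -h
  have d1 : t - v ∣ 4 := ⟨t + v, h4.symm⟩
  have d2 : t + v ∣ 4 := ⟨t - v, by linarith [mul_comm (t - v) (t + v)]⟩
  have b1 : t - v ≤ 4 := Int.le_of_dvd (by norm_num) d1
  have b2 : t + v ≤ 4 := Int.le_of_dvd (by norm_num) d2
  have b3 : -(t - v) ≤ 4 := Int.le_of_dvd (by norm_num) ((neg_dvd).mpr d1)
  have b4 : -(t + v) ≤ 4 := Int.le_of_dvd (by norm_num) ((neg_dvd).mpr d2)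
  have hv : -4 ≤ v ∧ v ≤ 4 := by omega
  have ht : -4 ≤ t ∧ t ≤ 4 := by omega
  obtain ⟨hv1, hv2⟩ := hv; obtain ⟨ht1, ht2⟩ := ht
  interval_cases v <;> interval_cases t <;> omega

lemma stab_core {a B c b p q r s : ℤ} (hb : b ≠ 0) (hd : B^2 - 4*a*c = b^2)
    (hdet : p*s - q*r = 1)
    (h1 : a*s^2 - B*r*s + c*r^2 = a)
    (h2 : -2*a*q*s + B*(p*s + q*r) - 2*c*p*r = B)
    (h3 : a*q^2 - B*p*q + c*p^2 = c) :
    q = 0 ∧ r = 0 ∧ p = s := by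
  have I1 : a*q + c*r = 0 := by
    have h : -2*(a*q + c*r) = 0 := by
      linear_combination 2*q*h1 + s*h2 - (B*s - 2*c*r)*hdet
    omega
  have I2 : a*(s-p) - B*r = 0 := by
    have h : 2*(a*(s-p) - B*r) = 0 := by
      linear_combination 2*p*h1 + r*h2 - (2*a*s - B*r)*hdet
    omega
  have I3 : c*(s-p) + B*q = 0 := by
    have h : -2*(c*(s-p) + B*q) = 0 := by
      linear_combination q*h2 + 2*s*h3 - (-B*q + 2*c*p)*hdet
    omega
  have K1 : (b*r)^2 = a^2 * ((p+s)^2 - 4) := by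
    linear_combination (-(r^2))*hd - (B*r + a*(s-p))*I2 - 4*a*r*I1 - 4*a^2*hdet
  have K2 : (b*q)^2 = c^2 * ((p+s)^2 - 4) := by
    linear_combination (-(q^2))*hd + (B*q + c*(s-p))*I3 + 4*c*q*I1 - 4*c^2*hdet
      - 2*c*(s-p)*I3 - 8*c*q*I1
  rcases eq_or_ne a 0 with ha | ha
  · rcases eq_or_ne c 0 with hc | hc
    · have hB : B ≠ 0 := by
        intro h0; rw [ha, hc, h0] at hd; simp at hd
        exact hb (by nlinarith [sq_nonneg b])
      have hr : r = 0 := by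
        have := I2; rw [ha] at this; simpa [hB] using (by simpa using this : -(B*r) = 0)
      have hq : q = 0 := by
        have := I3; rw [hc] at this
        have : B * q = 0 := by linarith
        rcases mul_eq_zero.mp this with h | h
        · exact absurd h hB
        · exact h
      refine ⟨hq, hr, ?_⟩
      have hps : p * s = 1 := by rw [hq, hr] at hdet; linarith
      rcases Int.eq_one_or_neg_one_of_mul_eq_one' hps with ⟨e1, e2⟩ | ⟨e1, e2⟩ <;> omega
    · have hdv : c ∣ b * q := by
        have : c^2 ∣ (b*q)^2 := ⟨(p+s)^2 - 4, K2⟩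
        exact (Int.pow_dvd_pow_iff two_ne_zero).mp this
      obtain ⟨v, hv⟩ := hdv
      have hv2 : v^2 = (p+s)^2 - 4 := by
        have : c^2 * v^2 = c^2 * ((p+s)^2 - 4) := by rw [← K2, hv]; ring
        exact mul_left_cancel₀ (pow_ne_zero 2 hc) this
      have hv0 : v = 0 := pell4 hv2
      have hq : q = 0 := by
        have : b * q = 0 := by rw [hv, hv0, mul_zero]
        rcases mul_eq_zero.mp this with h | h
        · exact absurd h hb
        · exact h
      have hr : r = 0 := by
        have : c * r = 0 := by rw [ha] at I1; linarith
        rcases mul_eq_zero.mp this with h | h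
        · exact absurd h hc
        · exact h
      refine ⟨hq, hr, ?_⟩
      have hps : p * s = 1 := by rw [hq, hr] at hdet; linarith
      rcases Int.eq_one_or_neg_one_of_mul_eq_one' hps with ⟨e1, e2⟩ | ⟨e1, e2⟩ <;> omega
  · have hdv : a ∣ b * r := by
      have : a^2 ∣ (b*r)^2 := ⟨(p+s)^2 - 4, K1⟩
      exact (Int.pow_dvd_pow_iff two_ne_zero).mp this
    obtain ⟨v, hv⟩ := hdv
    have hv2 : v^2 = (p+s)^2 - 4 := by
      have : a^2 * v^2 = a^2 * ((p+s)^2 - 4) := by rw [← K1, hv]; ring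
      exact mul_left_cancel₀ (pow_ne_zero 2 ha) this
    have hv0 : v = 0 := pell4 hv2
    have hr : r = 0 := by
      have : b * r = 0 := by rw [hv, hv0, mul_zero]
      rcases mul_eq_zero.mp this with h | h
      · exact absurd h hb
      · exact h
    have hq : q = 0 := by
      have : a * q = 0 := by rw [hr] at I1; linarith
      rcases mul_eq_zero.mp this with h | h
      · exact absurd h ha
      · exact h
    refine ⟨hq, hr, ?_⟩
    have hps : p * s = 1 := by rw [hq, hr] at hdet; linarith
    rcases Int.eq_one_or_neg_one_of_mul_eq_one' hps with ⟨e1, e2⟩ | ⟨e1, e2⟩ <;> omega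

lemma stab_scalar {b : ℤ} (hb : b ≠ 0) {Q : ℤ × ℤ × ℤ} (hQ : discQF Q = b^2)
    {τ : SL2Z} (hfix : actQF τ Q = Q) :
    τ.1 0 1 = 0 ∧ τ.1 1 0 = 0 ∧ τ.1 0 0 = τ.1 1 1 := by
  obtain ⟨a, B, c⟩ := Q
  have hdet := τ.2
  rw [Matrix.det_fin_two] at hdet
  simp only [actQF, Prod.mk.injEq] at hfix
  obtain ⟨h1, h2, h3⟩ := hfix
  simp only [discQF] at hQ
  exact stab_core hb hQ hdet (by linear_combination h1) (by linear_combination h2)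
    (by linear_combination h3)

lemma scalar_comm {τ : SL2Z} (h01 : τ.1 0 1 = 0) (h10 : τ.1 1 0 = 0)
    (hdiag : τ.1 0 0 = τ.1 1 1) (γ : SL2Z) : τ * γ = γ * τ := by
  have hmat : τ.1 = τ.1 0 0 • (1 : Matrix (Fin 2) (Fin 2) ℤ) := by
    ext i j
    fin_cases i <;> fin_cases j <;>
      simp [Matrix.one_apply, h01, h10, hdiag.symm]
  apply Subtype.ext
  show τ.1 * γ.1 = γ.1 * τ.1
  rw [hmat, Matrix.smul_mul, Matrix.mul_smul, Matrix.one_mul, Matrix.mul_one]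

/-- for square discriminant `d`, `(γ, Q) ↦ γQ` induces a bijection
`(Γ∞\Γ) × (Γ\𝒬_d) ↔ Γ∞\𝒬_d` (formulated via a set `R` of representatives of `Γ\𝒬_d`). -/
theorem stmt8 (d b : ℤ) (hb : 0 < b) (hd : d = b ^ 2)
    (R : Set {Q : ℤ × ℤ × ℤ // discQF Q = d})
    (hR : ∀ Q : {Q : ℤ × ℤ × ℤ // discQF Q = d},
      ∃! Q' : {Q : ℤ × ℤ × ℤ // discQF Q = d}, Q' ∈ R ∧ ∃ γ : SL2Z, actQF γ Q.val = Q'.val) :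
    ∃ f : Quotient (QuotientGroup.rightRel GammaInf) × R → Quotient (sGIQ d),
      (∀ (γ : SL2Z) (Q : R), f (Quotient.mk _ γ, Q) =
        Quotient.mk _ ⟨actQF γ Q.val.val, by rw [discQF_actQF]; exact Q.val.prop⟩) ∧
      Function.Bijective f := by
  have hlift : ∀ (Q : R) (γ₁ γ₂ : SL2Z),
      (QuotientGroup.rightRel GammaInf).r γ₁ γ₂ →
      Quotient.mk (sGIQ d) ⟨actQF γ₁ Q.val.val, by rw [discQF_actQF]; exact Q.val.prop⟩ =
      Quotient.mk (sGIQ d) ⟨actQF γ₂ Q.val.val, by rw [discQF_actQF]; exact Q.val.prop⟩ := by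
    intro Q γ₁ γ₂ hrel
    rw [QuotientGroup.rightRel_apply] at hrel
    apply Quotient.sound
    refine ⟨γ₂ * γ₁⁻¹, hrel, ?_⟩
    show actQF (γ₂ * γ₁⁻¹) (actQF γ₁ Q.val.val) = actQF γ₂ Q.val.val
    rw [← actQF_mul, inv_mul_cancel_right]
  refine ⟨fun x => Quotient.liftOn x.1
    (fun γ => Quotient.mk (sGIQ d) ⟨actQF γ x.2.val.val, by
      rw [discQF_actQF]; exact x.2.val.prop⟩) (hlift x.2), fun γ Q => rfl, ?_, ?_⟩
  · -- injective
    rintro ⟨x₁, Q₁⟩ ⟨x₂, Q₂⟩ h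
    obtain ⟨γ₁, rfl⟩ := Quotient.exists_rep x₁
    obtain ⟨γ₂, rfl⟩ := Quotient.exists_rep x₂
    have hrel := Quotient.exact h
    obtain ⟨η, hη0, hη⟩ := hrel
    have hηQ : actQF η (actQF γ₁ Q₁.val.val) = actQF γ₂ Q₂.val.val := hη
    have hb0 : b ≠ 0 := ne_of_gt hb
    -- Q₁ = Q₂
    have hQeq : Q₁ = Q₂ := by
      obtain ⟨W, hW, hWu⟩ := hR Q₁.val
      have e1 : Q₁.val = W := hWu Q₁.val ⟨Q₁.prop, 1, actQF_one _⟩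
      have e2 : Q₂.val = W := by
        refine hWu Q₂.val ⟨Q₂.prop, γ₂⁻¹ * (η * γ₁), ?_⟩
        rw [actQF_mul, actQF_mul, hηQ, ← actQF_mul, inv_mul_cancel, actQF_one]
      exact Subtype.ext (e1.trans e2.symm)
    subst hQeq
    have hτfix : actQF (γ₂⁻¹ * (η * γ₁)) Q₁.val.val = Q₁.val.val := by
      rw [actQF_mul, actQF_mul, hηQ, ← actQF_mul, inv_mul_cancel, actQF_one]
    obtain ⟨h01, h10, hdiag⟩ := stab_scalar hb0 (hd ▸ Q₁.val.prop) hτfix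
    set τ : SL2Z := γ₂⁻¹ * (η * γ₁) with hτ
    have hτmem : τ ∈ GammaInf := h10
    have hγ₂ : γ₂ = η * γ₁ * τ⁻¹ := by
      rw [hτ]; group
    have hcomm : γ₁ * τ⁻¹ = τ⁻¹ * γ₁ := by
      have h := scalar_comm h01 h10 hdiag γ₁
      calc γ₁ * τ⁻¹ = τ⁻¹ * (τ * γ₁) * τ⁻¹ := by group
        _ = τ⁻¹ * (γ₁ * τ) * τ⁻¹ := by rw [h]
        _ = τ⁻¹ * γ₁ := by group
    have hkey : γ₂ * γ₁⁻¹ = η * τ⁻¹ := by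
      rw [hγ₂, mul_assoc η, hcomm]; group
    have : (QuotientGroup.rightRel GammaInf).r γ₁ γ₂ := by
      rw [QuotientGroup.rightRel_apply, hkey]
      exact mul_mem hη0 (inv_mem hτmem)
    exact Prod.ext (Quotient.sound this) rfl
  · -- surjective
    intro y
    obtain ⟨Q0, rfl⟩ := Quotient.exists_rep y
    obtain ⟨W, ⟨hWR, γ, hγ⟩, _⟩ := hR Q0
    refine ⟨(Quotient.mk _ γ⁻¹, ⟨W, hWR⟩), ?_⟩
    show Quotient.mk (sGIQ d) ⟨actQF γ⁻¹ W.val, _⟩ = Quotient.mk (sGIQ d) Q0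
    congr 1
    apply Subtype.ext
    show actQF γ⁻¹ W.val = Q0.val
    rw [← hγ, ← actQF_mul, inv_mul_cancel, actQF_one]
end

section
/- If Q is an integral binary quadratic form of positive square discriminant (nonzero discriminant that is a perfect square), then the stabilizer of Q in PSL₂(ℤ) is trivial. -/
open scoped Real
open Complex

/-- a form of positive square discriminant has trivial stabilizer in `PSL₂(ℤ)`. -/
theorem stmt9 (Q : ℤ × ℤ × ℤ) (n : ℤ) (hn : 1 ≤ n) (hd : discQF Q = n ^ 2)
    (γ : SL2Z) (hγ : actQF γ Q = Q) : γ = 1 ∨ γ = -1 := by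
  obtain ⟨a, b, c⟩ := Q
  set α := γ.1 0 0 with hα
  set β := γ.1 0 1 with hβ
  set δ := γ.1 1 0 with hδ
  set ε := γ.1 1 1 with hε
  have hdet : α * ε - β * δ = 1 := by
    have := γ.2
    rwa [Matrix.det_fin_two] at this
  simp only [actQF, Prod.mk.injEq] at hγ
  obtain ⟨h1, h2, h3⟩ := hγ
  simp only [discQF] at hd
  have hS : a * β + c * δ = 0 := by
    have h2S : 2 * (a * β + c * δ) = 0 := by
      linear_combination (ε * b + 2 * β * a - 2 * (a * β + c * δ)) * hdet - ε * h2 - 2 * β * h1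
    omega
  have hT : b * δ + a * (α - ε) = 0 := by
    have hεT : ε * (b * δ + a * (α - ε)) = 0 := by
      linear_combination -h1 + a * hdet + δ * hS
    have hβT : 2 * (β * (b * δ + a * (α - ε))) = 0 := by
      linear_combination h2 - b * hdet + 2 * α * hS
    rcases eq_or_ne ε 0 with hε0 | hε0
    · have hβ0 : β ≠ 0 := by
        intro h
        rw [hε0, h] at hdet; simp at hdet
      have hb : β * (b * δ + a * (α - ε)) = 0 := by omega
      exact (mul_eq_zero.mp hb).resolve_left hβ0
    · exact (mul_eq_zero.mp hεT).resolve_left hε0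
  have hU : c * (ε - α) + b * β = 0 := by
    have hαU : α * (c * (ε - α) + b * β) = 0 := by
      linear_combination -h3 + c * hdet + β * hS
    have hδU : 2 * (δ * (c * (ε - α) + b * β)) = 0 := by
      linear_combination h2 - b * hdet + 2 * ε * hS
    rcases eq_or_ne α 0 with hα0 | hα0
    · have hδ0 : δ ≠ 0 := by
        intro h
        rw [hα0, h] at hdet; simp at hdet
      have hb : δ * (c * (ε - α) + b * β) = 0 := by omega
      exact (mul_eq_zero.mp hb).resolve_left hδ0
    · exact (mul_eq_zero.mp hαU).resolve_left hα0
  have hn0 : n ≠ 0 := by omega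
  have key : δ = 0 ∧ β = 0 ∧ α = ε := by
    by_cases ha : a = 0
    · have hb : b ≠ 0 := by
        intro h
        rw [ha, h] at hd
        nlinarith [hn]
      have hδ0 : δ = 0 := by
        have hbd : b * δ = 0 := by rw [ha] at hT; linarith
        exact (mul_eq_zero.mp hbd).resolve_left hb
      have hαε : α * ε = 1 := by rw [hδ0] at hdet; linarith
      have hae : α = ε := by
        rcases Int.eq_one_or_neg_one_of_mul_eq_one' hαε with ⟨h1', h2'⟩ | ⟨h1', h2'⟩ <;> omega
      have hβ0 : β = 0 := by
        have hbb : b * β = 0 := by rw [hae] at hU; linarith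
        exact (mul_eq_zero.mp hbb).resolve_left hb
      exact ⟨hδ0, hβ0, hae⟩
    · have keyid : (a * (α + ε)) ^ 2 = 4 * a ^ 2 + (n * δ) ^ 2 := by
        linear_combination ((b * δ + a * (α - ε)) - 2 * b * δ) * hT + δ ^ 2 * hd +
          4 * a * δ * hS + 4 * a ^ 2 * hdet
      have hdvd : a ∣ n * δ := by
        rw [← Int.pow_dvd_pow_iff (two_ne_zero)]
        exact ⟨(α + ε) ^ 2 - 4, by linear_combination -keyid⟩
      obtain ⟨m, hm⟩ := hdvd
      have ht2 : (α + ε) ^ 2 = m ^ 2 + 4 := by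
        have ha2 : (a : ℤ) ^ 2 ≠ 0 := pow_ne_zero 2 ha
        have hq : a ^ 2 * ((α + ε) ^ 2) = a ^ 2 * (m ^ 2 + 4) := by
          rw [hm] at keyid
          linear_combination keyid
        exact mul_left_cancel₀ ha2 hq
      set t := α + ε with htdef
      have hfac : (t - m) * (t + m) = 4 := by linear_combination ht2
      have hd1 : t - m ∣ 4 := ⟨t + m, hfac.symm⟩
      have hd2 : t + m ∣ 4 := Dvd.intro_left _ hfac
      have hb1 : t - m ≤ 4 := Int.le_of_dvd (by norm_num) hd1
      have hb1' : -4 ≤ t - m := by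
        have := Int.le_of_dvd (show (0:ℤ) < 4 by norm_num) ((neg_dvd).mpr hd1)
        omega
      have hb2 : t + m ≤ 4 := Int.le_of_dvd (by norm_num) hd2
      have hb2' : -4 ≤ t + m := by
        have := Int.le_of_dvd (show (0:ℤ) < 4 by norm_num) ((neg_dvd).mpr hd2)
        omega
      have hbt : -4 ≤ t ∧ t ≤ 4 := by omega
      have hbm : -4 ≤ m ∧ m ≤ 4 := by omega
      obtain ⟨hbt1, hbt2⟩ := hbt
      obtain ⟨hbm1, hbm2⟩ := hbm
      have hm0 : m = 0 := by
        interval_cases t <;> interval_cases m <;> omega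
      have hδ0 : δ = 0 := by
        rw [hm0, mul_zero] at hm
        rcases mul_eq_zero.mp hm with h | h
        · exact absurd h hn0
        · exact h
      have hae : α = ε := by
        rw [hδ0] at hT
        have := (mul_eq_zero.mp (by linarith : a * (α - ε) = 0)).resolve_left ha
        omega
      have hβ0 : β = 0 := by
        rw [hδ0] at hS
        have := (mul_eq_zero.mp (by linarith : a * β = 0)).resolve_left ha
        exact this
      exact ⟨hδ0, hβ0, hae⟩
  obtain ⟨hδ0, hβ0, hae⟩ := key
  have hα1 : α * α = 1 := by
    rw [hδ0, hβ0, ← hae] at hdet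
    linarith
  have hmat : γ.1 = !![α, β; δ, ε] := by
    rw [Matrix.eta_fin_two γ.1]
  rcases mul_self_eq_one_iff.mp hα1 with h | h
  · left
    apply Subtype.ext
    rw [hmat, hδ0, hβ0, ← hae, h]
    simp [Matrix.one_fin_two]
  · right
    apply Subtype.ext
    rw [hmat, hδ0, hβ0, ← hae, h]
    simp [Matrix.SpecialLinearGroup.coe_neg, Matrix.one_fin_two]
end

section
/- Under the bijection (γ, Q) ↦ γQ from (Γ_∞\Γ) × (Γ\Q_d) to Γ_∞\Q_d for square discriminant d = b² (b > 0): the pair (γ₀, [a,b,0]) with γ₀ = [[0,-1],[1,0]] maps to the Γ_∞-class of [0,-b,a], and the pair (γ_β, [a,b,0]) with β = -b'/a' (a' = a/g, b' = b/g, g = gcd(a,b)) and γ_β = [[*,*],[a',b']] maps to the Γ_∞-class of [0, b, g·ā'], where ā' is the inverse of a' modulo b'. -/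
open scoped Real
open Complex

/-! `γ₀` is the matrix `S`, which swaps the outer coefficients of a form. A matrix `γ` with
bottom row `(a', b')` sends the root `-b'/a'` of `[a, b, 0]` to `∞`, so `γ[a, b, 0] = [0, b, c]`
with `c = aβ² - bαβ` for the top row `(α, β)`. Since `αb' - βa' = 1` we have `a'β ≡ -1` mod `b'`,
hence `a'β² ≡ ā'` mod `b'` and `c ≡ g ā'` mod `b`. Finally `Tᵐ` shifts the last coefficient of
a degenerate form `[0, b, c]` by `-mb`, which identifies its `Γ∞`-class with `c` mod `b`. -/

open ModularGroup

lemma actQF_S (Q : ℤ × ℤ × ℤ) : actQF S Q = (Q.2.2, -Q.2.1, Q.1) := by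
  obtain ⟨a, b, c⟩ := Q
  simp [actQF]

lemma actQF_T_zpow (m : ℤ) (Q : ℤ × ℤ × ℤ) :
    actQF (T ^ m) Q = (Q.1, Q.2.1 - 2 * Q.1 * m, Q.2.2 - Q.2.1 * m + Q.1 * m ^ 2) := by
  obtain ⟨a, b, c⟩ := Q
  simp only [actQF, coe_T_zpow, Matrix.of_apply, Matrix.cons_val', Matrix.cons_val_zero,
    Matrix.cons_val_one, Matrix.cons_val_fin_one, Prod.mk.injEq]
  refine ⟨by ring, by ring, by ring⟩

lemma gammaInfEquivQF_of_modEq {B C C' : ℤ} (h : C ≡ C' [ZMOD B]) :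
    GammaInfEquivQF (0, B, C) (0, B, C') := by
  obtain ⟨k, hk⟩ := Int.modEq_iff_dvd.1 h
  refine ⟨T ^ (-k), by simp [coe_T_zpow], ?_⟩
  simp only [actQF_T_zpow, Prod.mk.injEq]
  refine ⟨trivial, by ring, by linear_combination -hk⟩

lemma det_eq_one_of_bottom_row {γ : SL2Z} {c d : ℤ} (hc : γ.1 1 0 = c) (hd : γ.1 1 1 = d) :
    γ.1 0 0 * d - γ.1 0 1 * c = 1 := by
  have h := γ.det_coe
  rwa [Matrix.det_fin_two, hc, hd] at h

lemma actQF_of_bottom_row_eq {γ : SL2Z} {a b g a' b' : ℤ} (ha : a = g * a') (hb : b = g * b')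
    (hc : γ.1 1 0 = a') (hd : γ.1 1 1 = b') :
    actQF γ (a, b, 0) = (0, b, a * γ.1 0 1 ^ 2 - b * γ.1 0 0 * γ.1 0 1) := by
  have hdet := det_eq_one_of_bottom_row hc hd
  subst ha hb
  simp only [actQF, hc, hd, Prod.mk.injEq]
  refine ⟨by ring, by linear_combination g * b' * hdet, by ring⟩

lemma mul_sq_modEq_of_det_eq_one {a n α β x : ℤ} (hdet : α * n - β * a = 1)
    (hx : a * x ≡ 1 [ZMOD n]) : a * β ^ 2 ≡ x [ZMOD n] := by
  have hβ : a * β ≡ -1 [ZMOD n] := Int.modEq_iff_dvd.2 ⟨-α, by linear_combination hdet⟩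
  calc a * β ^ 2 = (a * β) * β := by ring
    _ ≡ -1 * β [ZMOD n] := hβ.mul_right β
    _ = -β * 1 := by ring
    _ ≡ -β * (a * x) [ZMOD n] := hx.symm.mul_left _
    _ = -(a * β) * x := by ring
    _ ≡ -(-1) * x [ZMOD n] := hβ.neg.mul_right x
    _ = x := by ring

theorem stmt17_general (b : ℤ) (a : ℤ)
    (g : ℤ) (hg : g = Int.gcd a b) (abar' : ℤ)
    (h3 : (a / g) * abar' ≡ 1 [ZMOD b / g])
    (γ₀ : SL2Z) (hγ₀ : γ₀.1 = !![0, -1; 1, 0]) :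
    actQF γ₀ (a, b, 0) = (0, -b, a) ∧
    (∀ γ : SL2Z, γ.1 1 0 = a / g → γ.1 1 1 = b / g →
      GammaInfEquivQF (actQF γ (a, b, 0)) (0, b, g * abar')) := by
  have ha : a = g * (a / g) := (Int.mul_ediv_cancel' (hg ▸ Int.gcd_dvd_left a b)).symm
  have hb : b = g * (b / g) := (Int.mul_ediv_cancel' (hg ▸ Int.gcd_dvd_right a b)).symm
  refine ⟨by simp [show γ₀ = S from Subtype.ext hγ₀, actQF_S], fun γ hc hd => ?_⟩
  have hdet := det_eq_one_of_bottom_row hc hd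
  have hscaled : a * γ.1 0 1 ^ 2 ≡ g * abar' [ZMOD b] := by
    rw [ha, hb, mul_assoc]
    exact (mul_sq_modEq_of_det_eq_one hdet h3).mul_left' (c := g)
  have htop : b * γ.1 0 0 * γ.1 0 1 ≡ 0 [ZMOD b] :=
    Int.modEq_zero_iff_dvd.2 (dvd_mul_of_dvd_left (dvd_mul_right b _) _)
  rw [actQF_of_bottom_row_eq ha hb hc hd]
  exact gammaInfEquivQF_of_modEq (by simpa using hscaled.sub htop)

/-- explicit images under the bijection
`(Γ∞\Γ) × (Γ\𝒬_d) → Γ∞\𝒬_d` of the pairs `(γ₀,[a,b,0])` and `(γ_β,[a,b,0])`. -/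
theorem stmt17 (b : ℤ) (hb : 0 < b) (a : ℤ) (ha : 0 ≤ a) (hab : a < b)
    (g : ℤ) (hg : g = Int.gcd a b) (abar' : ℤ) (h1 : 0 ≤ abar') (h2 : abar' < b / g)
    (h3 : (a / g) * abar' ≡ 1 [ZMOD b / g])
    (γ₀ : SL2Z) (hγ₀ : γ₀.1 = !![0, -1; 1, 0]) :
    actQF γ₀ (a, b, 0) = (0, -b, a) ∧
    (∀ γ : SL2Z, γ.1 1 0 = a / g → γ.1 1 1 = b / g →
      GammaInfEquivQF (actQF γ (a, b, 0)) (0, b, g * abar')) :=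
  stmt17_general b a g hg abar' h3 γ₀ hγ₀
end
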